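/- arXiv:1202.3009 — 5 statements merged into one kernel-verified Lean document; each statement's English description precedes it below -/
import Mathlib

section
/- Let q be a finite-dimensional Lie algebra over a field K of characteristic zero with a decomposition q = f ⊕ V (f a Lie subalgebra, V a complementary subspace), and let q̃ be the contraction of q with respect to this decomposition. Define the index of a finite-dimensional Lie algebra a as ind a = min over ξ ∈ a* of dim a_ξ, where a_ξ = {x ∈ a : ξ([x,y]) = 0 for all y ∈ a} is the coadjoint stabiliser. Then ind q̃ ≥ ind q; that is, the index cannot decrease under the contraction. -/
open Module LinearMap Polynomial


/-- The index of a (possibly non-Lie) bilinear bracket `br` on a finite-dimensional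
vector space `q`: the minimum over all `ξ ∈ q*` of the dimension of the stabiliser
`q_ξ = {x ∈ q : ξ (br x y) = 0 for all y}`. -/
noncomputable def bracketIndex (K : Type) [Field K]
    (q : Type) [AddCommGroup q] [Module K q]
    (br : q →ₗ[K] q →ₗ[K] q) : ℕ :=
  sInf (Set.range fun ξ : Module.Dual K q =>
    Module.finrank K (LinearMap.ker ((LinearMap.llcomp K q q K ξ).comp br)))

lemma genericRank {K : Type} [Field K] [Infinite K]
    {q : Type} [AddCommGroup q] [Module K q] [FiniteDimensional K q]
    {D : Type} [AddCommGroup D] [Module K D] [FiniteDimensional K D]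
    (C₀ C₁ C₂ : q →ₗ[K] D) :
    ∃ t : K, t ≠ 0 ∧
      Module.finrank K (LinearMap.ker (C₀ + t • C₁ + (t*t) • C₂)) ≤
        Module.finrank K (LinearMap.ker C₀) := by
  classical
  obtain ⟨W, hW⟩ := Submodule.exists_isCompl (LinearMap.ker C₀)
  let w : Basis (Fin (finrank K W)) K W := Module.finBasis K W
  set r := finrank K W with hrdef
  let x : Fin r → q := fun i => (w i : q)
  have hspan : Submodule.span K (Set.range x) ≤ W := by
    rw [Submodule.span_le]; rintro _ ⟨i, rfl⟩; exact (w i).2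
  have hliw : LinearIndependent K x :=
    (w.linearIndependent).map' (Submodule.subtype _) (Submodule.ker_subtype _)
  have hli : LinearIndependent K (fun i => C₀ (x i)) := by
    refine hliw.map (f := C₀) ?_
    exact Disjoint.mono_left hspan hW.disjoint.symm
  -- dual family
  let S := Submodule.span K (Set.range fun i => C₀ (x i))
  let B : Basis (Fin r) K S := Basis.span hli
  have hsurj : Function.Surjective S.dualRestrict := Subspace.dualRestrict_surjective
  have hg : ∀ i : Fin r, ∃ g : Module.Dual K D, S.dualRestrict g = B.coord i :=
    fun i => hsurj _
  choose g hgB using hg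
  have hdual : ∀ i j, g j (C₀ (x i)) = if i = j then 1 else 0 := by
    intro i j
    have hmem : C₀ (x i) ∈ S := Submodule.subset_span ⟨i, rfl⟩
    have : g j (C₀ (x i)) = S.dualRestrict (g j) ⟨C₀ (x i), hmem⟩ := rfl
    rw [this, hgB]
    have : (⟨C₀ (x i), hmem⟩ : S) = B i := by
      apply Subtype.ext
      exact congrArg Subtype.val (Basis.span_apply hli i).symm
    rw [this, Basis.coord_apply, Basis.repr_self]
    simp [Finsupp.single_apply, eq_comm]
  -- polynomial matrix
  let Pm : Matrix (Fin r) (Fin r) (Polynomial K) := fun i j =>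
    Polynomial.C (g j (C₀ (x i))) + Polynomial.C (g j (C₁ (x i))) * X
      + Polynomial.C (g j (C₂ (x i))) * X ^ 2
  have hPm0 : Pm.det.eval 0 = 1 := by
    have : (evalRingHom (0:K)) Pm.det = ((evalRingHom (0:K)).mapMatrix Pm).det :=
      RingHom.map_det _ _
    have h2 : (evalRingHom (0:K)).mapMatrix Pm = 1 := by
      ext i j
      rw [RingHom.mapMatrix_apply, Matrix.map_apply]
      simp only [Pm, hdual]
      simp [Matrix.one_apply]
      split_ifs <;> simp
    rw [show Pm.det.eval 0 = (evalRingHom (0:K)) Pm.det from rfl, this, h2, Matrix.det_one]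
  have hPmne : Pm.det ≠ 0 := fun h => by simp [h] at hPm0
  have hpne : X * Pm.det ≠ 0 := mul_ne_zero X_ne_zero hPmne
  have : ∃ t : K, (X * Pm.det).eval t ≠ 0 := by
    by_contra h
    push_neg at h
    exact hpne (Polynomial.eq_zero_of_infinite_isRoot _
      (Set.infinite_univ.mono (fun t _ => h t)))
  obtain ⟨t, ht⟩ := this
  rw [eval_mul, eval_X] at ht
  have ht0 : t ≠ 0 := fun h => ht (by simp [h])
  have htdet : Pm.det.eval t ≠ 0 := fun h => ht (by simp [h])
  refine ⟨t, ht0, ?_⟩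
  set Ct := C₀ + t • C₁ + (t*t) • C₂ with hCt
  -- matrix at t
  let Mt : Matrix (Fin r) (Fin r) K := fun i j => g j (Ct (x i))
  have hMt : Mt.det ≠ 0 := by
    have : (evalRingHom t) Pm.det = ((evalRingHom t).mapMatrix Pm).det :=
      RingHom.map_det _ _
    have h2 : (evalRingHom t).mapMatrix Pm = Mt := by
      ext i j
      rw [RingHom.mapMatrix_apply, Matrix.map_apply]
      simp [Pm, Mt, hCt, map_add, map_smul, smul_eq_mul]
      ring
    rw [show Pm.det.eval t = (evalRingHom t) Pm.det from rfl, this, h2] at htdet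
    exact htdet
  have hlit : LinearIndependent K (fun i => Ct (x i)) := by
    rw [Fintype.linearIndependent_iff]
    intro c hc
    have hvm : Matrix.vecMul c Mt = 0 := by
      funext j
      have h3 : g j (∑ i, c i • Ct (x i)) = 0 := by rw [hc]; simp
      simpa [Matrix.vecMul, dotProduct, Mt, mul_comm] using h3
    have := Matrix.eq_zero_of_vecMul_eq_zero hMt hvm
    exact fun i => congrFun this i
  -- finrank chain
  have hrk : r ≤ finrank K (LinearMap.range Ct) := by
    have h1 : finrank K (Submodule.span K (Set.range fun i => Ct (x i))) = r := by
      rw [finrank_span_eq_card hlit, Fintype.card_fin]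
    have h2 : Submodule.span K (Set.range fun i => Ct (x i)) ≤ LinearMap.range Ct := by
      rw [Submodule.span_le]; rintro _ ⟨i, rfl⟩; exact ⟨x i, rfl⟩
    calc r = _ := h1.symm
    _ ≤ _ := Submodule.finrank_mono h2
  have e1 : finrank K (LinearMap.range Ct) + finrank K (LinearMap.ker Ct) = finrank K q :=
    LinearMap.finrank_range_add_finrank_ker Ct
  have e2 : finrank K (LinearMap.ker C₀) + r = finrank K q := by
    simpa [hrdef] using Submodule.finrank_add_eq_of_isCompl hW
  omega

/-- Let `q` be a finite-dimensional Lie algebra over a field of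
characteristic zero, with a decomposition `q = f ⊕ V` (`f` a Lie subalgebra and `V` a
complementary subspace), and let `q̃` be the contraction of `q` with respect to this
decomposition, with bracket `br` given by `br ξ η = ⁅ξ, η⁆`, `br ξ v = prV ⁅ξ, v⁆`,
`br v w = 0` for `ξ, η ∈ f`, `v, w ∈ V`. Then `ind q̃ ≥ ind q`, where the index is the
minimal dimension of a coadjoint stabiliser. -/
theorem index_of_contraction_ge
    (K : Type) [Field K] [CharZero K]
    (q : Type) [LieRing q] [LieAlgebra K q] [FiniteDimensional K q]
    (f : LieSubalgebra K q) (V : Submodule K q)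
    (hcompl : IsCompl f.toSubmodule V)
    (prV : q →ₗ[K] q)
    (hprV_V : ∀ v ∈ V, prV v = v)
    (hprV_f : ∀ x ∈ f, prV x = 0)
    (brq : q →ₗ[K] q →ₗ[K] q)
    (hbrq : ∀ x y : q, brq x y = ⁅x, y⁆)
    (br : q →ₗ[K] q →ₗ[K] q)
    (hff : ∀ x ∈ f, ∀ y ∈ f, br x y = ⁅x, y⁆)
    (hfV : ∀ x ∈ f, ∀ v ∈ V, br x v = prV ⁅x, v⁆)
    (hVf : ∀ x ∈ f, ∀ v ∈ V, br v x = - prV ⁅x, v⁆)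
    (hVV : ∀ v ∈ V, ∀ w ∈ V, br v w = 0) :
    bracketIndex K q brq ≤ bracketIndex K q br := by
  classical
  -- the complementary projection onto f
  set Qm : q →ₗ[K] q := LinearMap.id - prV with hQmdef
  have hQ : ∀ z : q, Qm z = z - prV z := fun z => rfl
  have hdec : ∀ z : q, prV z ∈ V ∧ Qm z ∈ f := by
    intro z
    have hz : z ∈ f.toSubmodule ⊔ V := by rw [hcompl.sup_eq_top]; trivial
    obtain ⟨a, ha, b, hb, hab⟩ := Submodule.mem_sup.mp hz
    have hb' : prV z = b := by
      rw [← hab]; simp [hprV_f a ha, hprV_V b hb]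
    refine ⟨hb' ▸ hb, ?_⟩
    rw [hQ, hb', ← hab]
    simpa using ha
  have hPV : ∀ z : q, prV z ∈ V := fun z => (hdec z).1
  have hQf : ∀ z : q, Qm z ∈ f := fun z => (hdec z).2
  have hPP : ∀ z : q, prV (prV z) = prV z := fun z => hprV_V _ (hPV z)
  have hPQ : ∀ z : q, prV (Qm z) = 0 := fun z => hprV_f _ (hQf z)
  have hQQ : ∀ z : q, Qm (Qm z) = Qm z := by
    intro z; rw [hQ (Qm z), hPQ, sub_zero]
  have hQP : ∀ z : q, Qm (prV z) = 0 := by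
    intro z; rw [hQ (prV z), hPP, sub_self]
  have hQlie : ∀ z z' : q, prV ⁅Qm z, Qm z'⁆ = 0 := fun z z' =>
    hprV_f _ (f.lie_mem (hQf z) (hQf z'))
  -- decomposition of the contracted bracket
  have hbr : ∀ x y : q, br x y =
      ⁅Qm x, Qm y⁆ + prV ⁅Qm x, prV y⁆ + prV ⁅prV x, Qm y⁆ := by
    intro x y
    have hx : Qm x + prV x = x := by rw [hQ]; abel
    have hy : Qm y + prV y = y := by rw [hQ]; abel
    have expand : br x y = br (Qm x) (Qm y) + br (Qm x) (prV y)
        + br (prV x) (Qm y) + br (prV x) (prV y) := by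
      conv_lhs => rw [← hx, ← hy]
      simp [map_add]
      abel
    rw [expand, hff _ (hQf x) _ (hQf y), hfV _ (hQf x) _ (hPV y),
      hVf _ (hQf y) _ (hPV x), hVV _ (hPV x) _ (hPV y)]
    rw [← lie_skew (Qm y) (prV x), map_neg]
    abel
  -- choose a minimising functional for br
  have hne : (Set.range fun ξ : Module.Dual K q =>
      Module.finrank K (LinearMap.ker ((LinearMap.llcomp K q q K ξ).comp br))).Nonempty :=
    ⟨_, ⟨0, rfl⟩⟩
  obtain ⟨ξ₀, hξ₀⟩ := Nat.sInf_mem hne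
  -- bilinear maps for the deformation
  set bb : (q →ₗ[K] q) → (q →ₗ[K] q) → (q →ₗ[K] q) → (q →ₗ[K] q →ₗ[K] q) :=
    fun A B Cc => (brq.compl₁₂ A B).compr₂ Cc with hbbdef
  have hbb : ∀ A B Cc : q →ₗ[K] q, ∀ x y : q, bb A B Cc x y = Cc ⁅A x, B y⁆ := by
    intro A B Cc x y
    simp [hbbdef, hbrq]
  set Mb : q →ₗ[K] q →ₗ[K] q := bb Qm prV Qm + bb prV Qm Qm + bb prV prV prV with hMbdef
  set Nb : q →ₗ[K] q →ₗ[K] q := bb prV prV Qm with hNbdef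
  haveI : Infinite K := inferInstance
  obtain ⟨t, ht0, hker⟩ := genericRank ((LinearMap.llcomp K q q K ξ₀).comp br)
    ((LinearMap.llcomp K q q K ξ₀).comp Mb) ((LinearMap.llcomp K q q K ξ₀).comp Nb)
  -- the automorphism φ and its inverse ψ
  set φ : q →ₗ[K] q := Qm + t • prV with hφdef
  set ψ : q →ₗ[K] q := Qm + t⁻¹ • prV with hψdef
  have hφ : ∀ z : q, φ z = Qm z + t • prV z := fun z => rfl
  have hψ : ∀ z : q, ψ z = Qm z + t⁻¹ • prV z := fun z => rfl
  have hψφ : ∀ z : q, ψ (φ z) = z := by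
    intro z
    rw [hψ, hφ, map_add, map_add, map_smul, map_smul, hQQ, hQP, hPQ, hPP]
    rw [smul_zero, add_zero, zero_add, smul_smul, inv_mul_cancel₀ ht0, one_smul]
    rw [hQ]; abel
  have hφψ : ∀ z : q, φ (ψ z) = z := by
    intro z
    rw [hφ, hψ, map_add, map_add, map_smul, map_smul, hQQ, hQP, hPQ, hPP]
    rw [smul_zero, add_zero, zero_add, smul_smul, mul_inv_cancel₀ ht0, one_smul]
    rw [hQ]; abel
  set φe : q ≃ₗ[K] q := LinearEquiv.ofLinear φ ψ
    (by ext z; exact hφψ z) (by ext z; exact hψφ z) with hφedef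
  -- the key algebraic identity
  have hkey : ∀ x y : q,
      φ (br x y + t • Mb x y + (t*t) • Nb x y) = brq (φ x) (φ y) := by
    intro x y
    have hu : prV ⁅Qm x, Qm y⁆ = 0 := hQlie x y
    have e1 : Mb x y = Qm ⁅Qm x, prV y⁆ + Qm ⁅prV x, Qm y⁆ + prV ⁅prV x, prV y⁆ := by
      simp only [hMbdef, LinearMap.add_apply, hbb]
    have e2 : Nb x y = Qm ⁅prV x, prV y⁆ := hbb _ _ _ x y
    have e3 : brq (φ x) (φ y) =
        ⁅Qm x, Qm y⁆ + t • ⁅Qm x, prV y⁆ + t • ⁅prV x, Qm y⁆ + (t*t) • ⁅prV x, prV y⁆ := by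
      rw [hbrq, hφ, hφ]
      simp only [lie_add, add_lie, lie_smul, smul_lie, smul_add, smul_smul]
      module
    rw [hbr, e1, e2, e3]
    set u := ⁅Qm x, Qm y⁆
    set v1 := ⁅Qm x, prV y⁆
    set v2 := ⁅prV x, Qm y⁆
    set w := ⁅prV x, prV y⁆
    rw [hφ]
    simp only [hQ, map_add, map_sub, map_smul, hPP, hu]
    module
  -- transfer the kernel through φ
  set η : Module.Dual K q := ξ₀.comp ψ with hηdef
  set E : q →ₗ[K] Module.Dual K q := (LinearMap.llcomp K q q K η).comp brq with hEdef
  set Ct : q →ₗ[K] Module.Dual K q :=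
    (LinearMap.llcomp K q q K ξ₀).comp br + t • (LinearMap.llcomp K q q K ξ₀).comp Mb
      + (t*t) • (LinearMap.llcomp K q q K ξ₀).comp Nb with hCtdef
  have hCtE : ∀ x y : q, Ct x y = E (φ x) (φ y) := by
    intro x y
    have h1 : Ct x y = ξ₀ (br x y + t • Mb x y + (t*t) • Nb x y) := by
      simp [hCtdef, map_add, map_smul]
    have h2 : E (φ x) (φ y) = ξ₀ (ψ (brq (φ x) (φ y))) := by
      simp [hEdef, hηdef]
    rw [h1, h2, ← hkey x y, hψφ]
  have hker2 : LinearMap.ker Ct = Submodule.map (φe.symm : q →ₗ[K] q) (LinearMap.ker E) := by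
    rw [← Submodule.comap_equiv_eq_map_symm]
    ext x
    simp only [Submodule.mem_comap, LinearMap.mem_ker]
    constructor
    · intro h
      ext z
      have hz : (φe : q →ₗ[K] q) x = φ x := rfl
      have : E (φ x) z = Ct x (ψ z) := by rw [hCtE x (ψ z), hφψ]
      rw [hz, this, h]
      simp
    · intro h
      ext y
      have hz : (φe : q →ₗ[K] q) x = φ x := rfl
      rw [hz] at h
      have : Ct x y = E (φ x) (φ y) := hCtE x y
      rw [this, h]
      simp
  have hfr : Module.finrank K (LinearMap.ker Ct) = Module.finrank K (LinearMap.ker E) := by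
    rw [hker2]
    exact LinearEquiv.finrank_map_eq φe.symm _
  calc bracketIndex K q brq ≤ Module.finrank K (LinearMap.ker E) := Nat.sInf_le ⟨η, rfl⟩
    _ = Module.finrank K (LinearMap.ker Ct) := hfr.symm
    _ ≤ Module.finrank K (LinearMap.ker ((LinearMap.llcomp K q q K ξ₀).comp br)) := hker
    _ = bracketIndex K q br := hξ₀
end

section
/- Let q be a finite-dimensional Lie algebra over a field K of characteristic zero with a decomposition q = f ⊕ V (f a Lie subalgebra, V a complementary subspace), dim f = m, dim q = n, and let q̃ be the contraction of q. Fix a basis b_1,…,b_n of q with b_1,…,b_m a basis of f and b_{m+1},…,b_n a basis of V, let A = K[x_1,…,x_n], and let μ : q → A be the linear map with μ(b_k) = x_k. Let {·,·} be an antisymmetric K-bilinear biderivation on A with {x_i, x_j} = μ([b_i, b_j]) for all i,j (the Lie–Poisson bracket of q), and let {·,·}~ be an antisymmetric K-bilinear biderivation on A with {x_i, x_j}~ = μ([b_i, b_j]~) (the Lie–Poisson bracket of q̃). For nonzero H ∈ A, write H = Σ_j H_j where H_j is the sum of the terms of H of total degree j in the variables x_{m+1},…,x_n, let d be the largest j with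 H_j ≠ 0, and set H^• = H_d (the highest t-component of H). Then: if {H, a} = 0 for all a ∈ A, then {H^•, a}~ = 0 for all a ∈ A; that is, the highest component of a central element of the Lie–Poisson algebra of q is central for the Lie–Poisson bracket of the contraction q̃. -/
open MvPolynomial

/-- The weight (degree in the variables `x_{m+1}, …, x_n`) of a monomial exponent `d`. -/
noncomputable def vWeight (n m : ℕ) (d : Fin n →₀ ℕ) : ℕ :=
  d.sum fun i e => if m ≤ (i : ℕ) then e else 0

/-- The bi-homogeneous component of `H` of degree `j` in the variables `x_{m+1}, …, x_n`. -/
noncomputable def vComponent (K : Type) [Field K] (n m : ℕ) (j : ℕ)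
    (H : MvPolynomial (Fin n) K) : MvPolynomial (Fin n) K :=
  ∑ d ∈ H.support.filter (fun d => vWeight n m d = j), monomial d (H.coeff d)

/-- The highest `t`-component `H^•` of `H`: its component of top degree in the
variables `x_{m+1}, …, x_n`. -/
noncomputable def vHighest (K : Type) [Field K] (n m : ℕ)
    (H : MvPolynomial (Fin n) K) : MvPolynomial (Fin n) K :=
  vComponent K n m (sSup {j : ℕ | vComponent K n m j H ≠ 0}) H


noncomputable def auxW (n m : ℕ) : Fin n → ℕ := fun i => if m ≤ (i : ℕ) then 1 else 0

lemma vWeight_eq_weight (n m : ℕ) (d : Fin n →₀ ℕ) :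
    vWeight n m d = Finsupp.weight (auxW n m) d := by
  rw [vWeight, Finsupp.weight_apply]
  apply Finset.sum_congr rfl
  intro i _
  simp only [auxW, smul_eq_mul, mul_ite, mul_one, mul_zero]

lemma vComponent_eq (K : Type) [Field K] (n m : ℕ) (j : ℕ) (H : MvPolynomial (Fin n) K) :
    vComponent K n m j H = weightedHomogeneousComponent (auxW n m) j H := by
  ext e
  rw [vComponent, coeff_weightedHomogeneousComponent]
  rw [MvPolynomial.coeff_sum]
  simp only [coeff_monomial]
  rw [Finset.sum_ite_eq' (H.support.filter fun d => vWeight n m d = j) e (fun d => H.coeff d)]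
  by_cases hw : Finsupp.weight (auxW n m) e = j
  · rw [if_pos hw]
    by_cases hc : H.coeff e = 0
    · rw [hc]
      exact ite_self 0
    · rw [if_pos]
      exact Finset.mem_filter.mpr ⟨mem_support_iff.mpr hc,
        by rw [vWeight_eq_weight]; exact hw⟩
  · rw [if_neg hw, if_neg]
    intro hmem
    exact hw (by rw [← vWeight_eq_weight]; exact (Finset.mem_filter.mp hmem).2)

lemma sum_comp (K : Type) [Field K] (n : ℕ) (w : Fin n → ℕ) (u : MvPolynomial (Fin n) K) :
    u = ∑ t ∈ Finset.range (u.weightedTotalDegree w + 1), weightedHomogeneousComponent w t u := by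
  ext e
  rw [MvPolynomial.coeff_sum]
  simp only [coeff_weightedHomogeneousComponent]
  rw [Finset.sum_ite_eq (Finset.range _) (Finsupp.weight w e) (fun _ => u.coeff e)]
  split_ifs with h
  · rfl
  · by_cases hc : u.coeff e = 0
    · rw [hc]
    · exact absurd (Finset.mem_range.mpr (Nat.lt_succ_of_le
        (le_weightedTotalDegree w (mem_support_iff.mpr hc)))) h

lemma comp_mul (K : Type) [Field K] (n : ℕ) (w : Fin n → ℕ) {g : MvPolynomial (Fin n) K} {r : ℕ}
    (hg : g.IsWeightedHomogeneous w r) (u : MvPolynomial (Fin n) K) (s : ℕ) :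
    weightedHomogeneousComponent w (r + s) (g * u) = g * weightedHomogeneousComponent w s u := by
  conv_lhs => rw [sum_comp K n w u]
  rw [Finset.mul_sum, map_sum]
  have hterm : ∀ t ∈ Finset.range (u.weightedTotalDegree w + 1),
      weightedHomogeneousComponent w (r + s) (g * weightedHomogeneousComponent w t u) =
      if t = s then g * weightedHomogeneousComponent w t u else 0 := by
    intro t _
    by_cases h : t = s
    · rw [if_pos h, h,
        (hg.mul (weightedHomogeneousComponent_isWeightedHomogeneous s u)).weightedHomogeneousComponent_same]
    · rw [if_neg h]
      exact (hg.mul (weightedHomogeneousComponent_isWeightedHomogeneous t u)).weightedHomogeneousComponent_ne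
        (r + s) (by omega)
  rw [Finset.sum_congr rfl hterm, Finset.sum_ite_eq' (Finset.range _) s
    (fun t => g * weightedHomogeneousComponent w t u)]
  split_ifs with h
  · rfl
  · rw [weightedHomogeneousComponent_eq_zero, mul_zero]
    have := Finset.mem_range.not.mp h
    omega


lemma degree_single_one_add {n : ℕ} (i : Fin n) (d : Fin n →₀ ℕ) :
    (Finsupp.single i 1 + d).degree = d.degree + 1 := by
  rw [Finsupp.degree_eq_weight_one, map_add]
  have : (Finsupp.weight 1) (Finsupp.single i 1) = 1 := by
    rw [Finsupp.weight_apply, Finsupp.sum_single_index] <;> simp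
  have h1 : (Finsupp.weight fun _ : Fin n => (1:ℕ)) (Finsupp.single i 1) = 1 := this
  rw [h1, ← Finsupp.degree_eq_weight_one]
  omega

lemma weight_single_one {n : ℕ} (w : Fin n → ℕ) (i : Fin n) :
    Finsupp.weight w (Finsupp.single i 1) = w i := by
  rw [Finsupp.weight_apply, Finsupp.sum_single_index] <;> simp



set_option maxHeartbeats 2000000 in
/-- Let `q = f ⊕ V` be a finite-dimensional Lie algebra decomposed into a
Lie subalgebra `f` (of dimension `m`) and a complementary subspace `V`, let `q̃` be the
contraction of `q`, and identify `S(q)` with `A = K[x_1,…,x_n]` via a basis `b_1,…,b_n` of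
`q` adapted to the decomposition.  Let `{·,·}` and `{·,·}~` be the Lie–Poisson brackets of
`q` and `q̃` on `A`.  If `H ∈ A` is nonzero and central for `{·,·}`, then its highest
component `H^•` (of top degree in `x_{m+1},…,x_n`) is central for `{·,·}~`. -/

theorem highest_component_of_central_is_central
    (K : Type) [Field K] [CharZero K]
    (q : Type) [LieRing q] [LieAlgebra K q] [FiniteDimensional K q]
    (f : LieSubalgebra K q) (V : Submodule K q)
    (hcompl : IsCompl f.toSubmodule V)
    (prV : q →ₗ[K] q)
    (hprV_V : ∀ v ∈ V, prV v = v)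
    (hprV_f : ∀ x ∈ f, prV x = 0)
    (n m : ℕ) (hmn : m ≤ n)
    (bq : Module.Basis (Fin n) K q)
    (hbf : ∀ i : Fin n, (i : ℕ) < m → bq i ∈ f)
    (hbV : ∀ i : Fin n, m ≤ (i : ℕ) → bq i ∈ V)
    (μ : q →ₗ[K] MvPolynomial (Fin n) K)
    (hμ : ∀ k, μ (bq k) = X k)
    (B : MvPolynomial (Fin n) K →ₗ[K] MvPolynomial (Fin n) K →ₗ[K] MvPolynomial (Fin n) K)
    (hBanti : ∀ a b, B a b = - B b a)
    (hBleib : ∀ a b c, B a (b * c) = b * B a c + B a b * c)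
    (hB : ∀ i j, B (X i) (X j) = μ ⁅bq i, bq j⁆)
    (Bt : MvPolynomial (Fin n) K →ₗ[K] MvPolynomial (Fin n) K →ₗ[K] MvPolynomial (Fin n) K)
    (hBtanti : ∀ a b, Bt a b = - Bt b a)
    (hBtleib : ∀ a b c, Bt a (b * c) = b * Bt a c + Bt a b * c)
    (hBt1 : ∀ i j : Fin n, (i : ℕ) < m → (j : ℕ) < m → Bt (X i) (X j) = μ ⁅bq i, bq j⁆)
    (hBt2 : ∀ i j : Fin n, (i : ℕ) < m → m ≤ (j : ℕ) → Bt (X i) (X j) = μ (prV ⁅bq i, bq j⁆))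
    (hBt3 : ∀ i j : Fin n, m ≤ (i : ℕ) → m ≤ (j : ℕ) → Bt (X i) (X j) = 0)
    (H : MvPolynomial (Fin n) K) (hH : H ≠ 0)
    (hcent : ∀ a, B H a = 0) :
    ∀ a, Bt (vHighest K n m H) a = 0 := by
  classical
  set w : Fin n → ℕ := auxW n m with hwdef
  have hwlt : ∀ i : Fin n, (i : ℕ) < m → w i = 0 := fun i hi => by
    simp [hwdef, auxW, not_le.mpr hi]
  have hwge : ∀ i : Fin n, m ≤ (i : ℕ) → w i = 1 := fun i hi => by
    simp [hwdef, auxW, hi]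
  -- basic bracket facts
  have hBone : ∀ a, B a (1 : MvPolynomial (Fin n) K) = 0 := by
    intro a
    have h := hBleib a 1 1
    simp only [one_mul, mul_one, left_eq_add] at h
    exact h
  have hBtone : ∀ a, Bt a (1 : MvPolynomial (Fin n) K) = 0 := by
    intro a
    have h := hBtleib a 1 1
    simp only [one_mul, mul_one, left_eq_add] at h
    exact h
  have hBC : ∀ a c, B a (MvPolynomial.C c) = 0 := by
    intro a c
    have h1 : (MvPolynomial.C c : MvPolynomial (Fin n) K) = c • 1 := by
      rw [smul_eq_C_mul, mul_one]
    rw [h1, map_smul, hBone, smul_zero]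
  have hBtC : ∀ a c, Bt a (MvPolynomial.C c) = 0 := by
    intro a c
    have h1 : (MvPolynomial.C c : MvPolynomial (Fin n) K) = c • 1 := by
      rw [smul_eq_C_mul, mul_one]
    rw [h1, map_smul, hBtone, smul_zero]
  have hBleib' : ∀ a b c, B (a * b) c = a * B b c + B a c * b := by
    intro a b c
    rw [hBanti (a*b) c, hBleib c a b, hBanti b c, hBanti a c]
    ring
  have hBtleib' : ∀ a b c, Bt (a * b) c = a * Bt b c + Bt a c * b := by
    intro a b c
    rw [hBtanti (a*b) c, hBtleib c a b, hBtanti b c, hBtanti a c]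
    ring
  -- projection facts
  have hprV_mem : ∀ z : q, prV z ∈ V ∧ z - prV z ∈ f := by
    intro z
    have hz : z ∈ f.toSubmodule ⊔ V := by rw [hcompl.sup_eq_top]; trivial
    obtain ⟨y, hy, v, hv, hyv⟩ := Submodule.mem_sup.mp hz
    have hpv : prV z = v := by
      rw [← hyv, map_add, hprV_f y hy, hprV_V v hv, zero_add]
    constructor
    · rw [hpv]; exact hv
    · rw [hpv, ← hyv, add_sub_cancel_right]; exact hy
  -- homogeneity of μ on f and V
  have homog_f : ∀ x ∈ f, IsWeightedHomogeneous w (μ x) 0 := by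
    intro x hx
    have hsp : x ∈ Submodule.span K (bq '' {i : Fin n | (i : ℕ) < m}) := by
      set s1 := ∑ i ∈ Finset.univ.filter (fun i : Fin n => (i : ℕ) < m),
        bq.repr x i • bq i with hs1
      set s2 := ∑ i ∈ Finset.univ.filter (fun i : Fin n => ¬ (i : ℕ) < m),
        bq.repr x i • bq i with hs2
      have hx12 : s1 + s2 = x := by
        rw [hs1, hs2, Finset.sum_filter_add_sum_filter_not]
        exact bq.sum_repr x
      have hs1mem : s1 ∈ Submodule.span K (bq '' {i : Fin n | (i : ℕ) < m}) :=
        Submodule.sum_mem _ (fun i hi => Submodule.smul_mem _ _ (Submodule.subset_span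
          ⟨i, (Finset.mem_filter.mp hi).2, rfl⟩))
      have hs2V : s2 ∈ V := Submodule.sum_mem _ (fun i hi => Submodule.smul_mem _ _
        (hbV i (le_of_not_gt (Finset.mem_filter.mp hi).2)))
      have hs1f : s1 ∈ f.toSubmodule := Submodule.sum_mem _ (fun i hi =>
        Submodule.smul_mem _ _ (hbf i (Finset.mem_filter.mp hi).2))
      have hs2f : s2 ∈ f.toSubmodule := by
        have h2 : s2 = x - s1 := eq_sub_of_add_eq' hx12
        rw [h2]
        exact sub_mem hx hs1f
      have hs20 : s2 = 0 := Submodule.disjoint_def.mp hcompl.disjoint s2 hs2f hs2V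
      rw [← hx12, hs20, add_zero]
      exact hs1mem
    have hle : Submodule.span K (bq '' {i : Fin n | (i : ℕ) < m}) ≤
        (weightedHomogeneousSubmodule K w 0).comap μ := by
      rw [Submodule.span_le]
      rintro _ ⟨i, hi, rfl⟩
      simp only [SetLike.mem_coe, Submodule.mem_comap, hμ, mem_weightedHomogeneousSubmodule]
      have hX := isWeightedHomogeneous_X K w i
      rwa [hwlt i hi] at hX
    exact (mem_weightedHomogeneousSubmodule _ _ _ _).mp (hle hsp)
  have homog_V : ∀ v ∈ V, IsWeightedHomogeneous w (μ v) 1 := by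
    intro x hx
    have hsp : x ∈ Submodule.span K (bq '' {i : Fin n | m ≤ (i : ℕ)}) := by
      set s1 := ∑ i ∈ Finset.univ.filter (fun i : Fin n => m ≤ (i : ℕ)),
        bq.repr x i • bq i with hs1
      set s2 := ∑ i ∈ Finset.univ.filter (fun i : Fin n => ¬ m ≤ (i : ℕ)),
        bq.repr x i • bq i with hs2
      have hx12 : s1 + s2 = x := by
        rw [hs1, hs2, Finset.sum_filter_add_sum_filter_not]
        exact bq.sum_repr x
      have hs1mem : s1 ∈ Submodule.span K (bq '' {i : Fin n | m ≤ (i : ℕ)}) :=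
        Submodule.sum_mem _ (fun i hi => Submodule.smul_mem _ _ (Submodule.subset_span
          ⟨i, (Finset.mem_filter.mp hi).2, rfl⟩))
      have hs1V : s1 ∈ V := Submodule.sum_mem _ (fun i hi => Submodule.smul_mem _ _
        (hbV i (Finset.mem_filter.mp hi).2))
      have hs2f : s2 ∈ f.toSubmodule := Submodule.sum_mem _ (fun i hi =>
        Submodule.smul_mem _ _ (hbf i (lt_of_not_ge (Finset.mem_filter.mp hi).2)))
      have hs2V : s2 ∈ V := by
        have h2 : s2 = x - s1 := eq_sub_of_add_eq' hx12
        rw [h2]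
        exact sub_mem hx hs1V
      have hs20 : s2 = 0 := Submodule.disjoint_def.mp hcompl.disjoint s2 hs2f hs2V
      rw [← hx12, hs20, add_zero]
      exact hs1mem
    have hle : Submodule.span K (bq '' {i : Fin n | m ≤ (i : ℕ)}) ≤
        (weightedHomogeneousSubmodule K w 1).comap μ := by
      rw [Submodule.span_le]
      rintro _ ⟨i, hi, rfl⟩
      simp only [SetLike.mem_coe, Submodule.mem_comap, hμ, mem_weightedHomogeneousSubmodule]
      have hX := isWeightedHomogeneous_X K w i
      rwa [hwge i hi] at hX
    exact (mem_weightedHomogeneousSubmodule _ _ _ _).mp (hle hsp)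
  -- the base case : brackets of variables
  have hXX : ∀ i k : Fin n,
      (∀ j, w i + w k < j → weightedHomogeneousComponent w j (B (X i) (X k)) = 0) ∧
      weightedHomogeneousComponent w (w i + w k) (B (X i) (X k)) = Bt (X i) (X k) := by
    intro i k
    have hBik : B (X i) (X k) = μ ⁅bq i, bq k⁆ := hB i k
    have hmem := hprV_mem ⁅bq i, bq k⁆
    have h1 : IsWeightedHomogeneous w (μ (prV ⁅bq i, bq k⁆)) 1 := homog_V _ hmem.1
    have h0 : IsWeightedHomogeneous w (μ (⁅bq i, bq k⁆ - prV ⁅bq i, bq k⁆)) 0 :=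
      homog_f _ hmem.2
    have hsplitμ : μ ⁅bq i, bq k⁆ =
        μ (⁅bq i, bq k⁆ - prV ⁅bq i, bq k⁆) + μ (prV ⁅bq i, bq k⁆) := by
      rw [← map_add, sub_add_cancel]
    rcases lt_or_ge (i : ℕ) m with hi | hi <;> rcases lt_or_ge (k : ℕ) m with hk | hk
    · have hsum : w i + w k = 0 := by rw [hwlt i hi, hwlt k hk]
      have hZf : ⁅bq i, bq k⁆ ∈ f := f.lie_mem (hbf i hi) (hbf k hk)
      have hf0 : IsWeightedHomogeneous w (μ ⁅bq i, bq k⁆) 0 := homog_f _ hZf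
      rw [hsum]
      constructor
      · intro j hj
        rw [hBik]
        exact hf0.weightedHomogeneousComponent_ne j (by omega)
      · rw [hBik, hf0.weightedHomogeneousComponent_same, hBt1 i k hi hk]
    · have hsum : w i + w k = 1 := by rw [hwlt i hi, hwge k hk]
      rw [hsum]
      constructor
      · intro j hj
        rw [hBik, hsplitμ, map_add, h0.weightedHomogeneousComponent_ne j (by omega),
          h1.weightedHomogeneousComponent_ne j (by omega), add_zero]
      · rw [hBik, hsplitμ, map_add, h0.weightedHomogeneousComponent_ne 1 (by omega),
          h1.weightedHomogeneousComponent_same, zero_add, hBt2 i k hi hk]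
    · have hsum : w i + w k = 1 := by rw [hwge i hi, hwlt k hk]
      have hBtik : Bt (X i) (X k) = μ (prV ⁅bq i, bq k⁆) := by
        rw [hBtanti, hBt2 k i hk hi, ← map_neg, ← map_neg, lie_skew]
      rw [hsum]
      constructor
      · intro j hj
        rw [hBik, hsplitμ, map_add, h0.weightedHomogeneousComponent_ne j (by omega),
          h1.weightedHomogeneousComponent_ne j (by omega), add_zero]
      · rw [hBik, hsplitμ, map_add, h0.weightedHomogeneousComponent_ne 1 (by omega),
          h1.weightedHomogeneousComponent_same, zero_add, hBtik]
    · have hsum : w i + w k = 2 := by rw [hwge i hi, hwge k hk]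
      rw [hsum]
      constructor
      · intro j hj
        rw [hBik, hsplitμ, map_add, h0.weightedHomogeneousComponent_ne j (by omega),
          h1.weightedHomogeneousComponent_ne j (by omega), add_zero]
      · rw [hBik, hsplitμ, map_add, h0.weightedHomogeneousComponent_ne 2 (by omega),
          h1.weightedHomogeneousComponent_ne 2 (by omega), add_zero, hBt3 i k hi hk]
  -- the inductive step
  have hstep : ∀ (i : Fin n) (a : MvPolynomial (Fin n) K) (p : ℕ),
      IsWeightedHomogeneous w a p →
      (∀ k : Fin n, (∀ j, p + w k < j → weightedHomogeneousComponent w j (B a (X k)) = 0) ∧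
        weightedHomogeneousComponent w (p + w k) (B a (X k)) = Bt a (X k)) →
      (∀ k : Fin n, (∀ j, (w i + p) + w k < j →
          weightedHomogeneousComponent w j (B (X i * a) (X k)) = 0) ∧
        weightedHomogeneousComponent w ((w i + p) + w k) (B (X i * a) (X k))
          = Bt (X i * a) (X k)) := by
    intro i a p ha hPa k
    have hsp : B (X i * a) (X k) = X i * B a (X k) + B (X i) (X k) * a := hBleib' _ _ _
    have hXi : IsWeightedHomogeneous w (X i : MvPolynomial (Fin n) K) (w i) :=
      isWeightedHomogeneous_X K w i
    constructor
    · intro j hj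
      rw [hsp, map_add]
      have h1 : weightedHomogeneousComponent w j (X i * B a (X k)) = 0 := by
        obtain ⟨j', rfl⟩ : ∃ j', j = w i + j' := ⟨j - w i, by omega⟩
        rw [comp_mul K n w hXi, (hPa k).1 j' (by omega), mul_zero]
      have h2 : weightedHomogeneousComponent w j (B (X i) (X k) * a) = 0 := by
        rw [mul_comm]
        obtain ⟨j', rfl⟩ : ∃ j', j = p + j' := ⟨j - p, by omega⟩
        rw [comp_mul K n w ha, (hXX i k).1 j' (by omega), mul_zero]
      rw [h1, h2, add_zero]
    · rw [hsp, map_add]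
      have h1 : weightedHomogeneousComponent w ((w i + p) + w k) (X i * B a (X k))
          = X i * Bt a (X k) := by
        rw [show (w i + p) + w k = w i + (p + w k) by omega, comp_mul K n w hXi, (hPa k).2]
      have h2 : weightedHomogeneousComponent w ((w i + p) + w k) (B (X i) (X k) * a)
          = Bt (X i) (X k) * a := by
        rw [mul_comm, show (w i + p) + w k = p + (w i + w k) by omega, comp_mul K n w ha,
          (hXX i k).2, mul_comm]
      rw [h1, h2, hBtleib']
  -- the monomial case, by induction on the degree
  have hmono : ∀ N : ℕ, ∀ d : Fin n →₀ ℕ, d.degree ≤ N →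
      ∀ k : Fin n, (∀ j, Finsupp.weight w d + w k < j →
          weightedHomogeneousComponent w j (B (monomial d 1) (X k)) = 0) ∧
        weightedHomogeneousComponent w (Finsupp.weight w d + w k) (B (monomial d 1) (X k))
          = Bt (monomial d 1) (X k) := by
    intro N
    induction N with
    | zero =>
      intro d hd k
      have hd0 : d = 0 := (Finsupp.degree_eq_zero_iff d).mp (Nat.le_zero.mp hd)
      subst hd0
      have hmon1 : (monomial (0 : Fin n →₀ ℕ) (1 : K)) = 1 := by
        rw [monomial_zero', MvPolynomial.C_1]
      have hb : B (monomial (0 : Fin n →₀ ℕ) (1 : K)) (X k) = 0 := by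
        rw [hmon1, hBanti, hBone, neg_zero]
      have hbt : Bt (monomial (0 : Fin n →₀ ℕ) (1 : K)) (X k) = 0 := by
        rw [hmon1, hBtanti, hBtone, neg_zero]
      constructor
      · intro j _
        rw [hb, map_zero]
      · rw [hb, hbt, map_zero]
    | succ N ih =>
      intro d hd
      by_cases hd0 : d = 0
      · exact ih d (by rw [hd0, map_zero]; exact Nat.zero_le N)
      · obtain ⟨i, hi⟩ := Finsupp.support_nonempty_iff.mpr hd0
        have hdi : d i ≠ 0 := Finsupp.mem_support_iff.mp hi
        set d' := d - Finsupp.single i 1 with hd'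
        have hsplit : Finsupp.single i 1 + d' = d := by
          ext j
          simp only [Finsupp.add_apply, Finsupp.tsub_apply, Finsupp.single_apply, hd']
          split_ifs with h
          · subst h; omega
          · omega
        have hdeg : d'.degree ≤ N := by
          have h3 := degree_single_one_add i d'
          rw [hsplit] at h3
          omega
        have hmon : monomial d (1 : K) = X i * monomial d' 1 := by
          rw [← hsplit, monomial_single_add, pow_one]
        have hw : Finsupp.weight w d = w i + Finsupp.weight w d' := by
          rw [← hsplit, map_add, weight_single_one]
        have hhom : IsWeightedHomogeneous w (monomial d' (1 : K)) (Finsupp.weight w d') :=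
          isWeightedHomogeneous_monomial w d' 1 rfl
        rw [hmon, hw]
        exact hstep i (monomial d' 1) (Finsupp.weight w d') hhom (ih d' hdeg)
  have hP : ∀ d : Fin n →₀ ℕ, ∀ k : Fin n,
      (∀ j, Finsupp.weight w d + w k < j →
          weightedHomogeneousComponent w j (B (monomial d 1) (X k)) = 0) ∧
        weightedHomogeneousComponent w (Finsupp.weight w d + w k) (B (monomial d 1) (X k))
          = Bt (monomial d 1) (X k) :=
    fun d => hmono d.degree d le_rfl
  -- the top degree
  obtain ⟨d₀, hd₀⟩ : ∃ d₀, d₀ = sSup {j : ℕ | vComponent K n m j H ≠ 0} := ⟨_, rfl⟩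
  have hvhigh : vHighest K n m H = vComponent K n m d₀ H := by rw [vHighest, hd₀]
  have hbdd : BddAbove {j : ℕ | vComponent K n m j H ≠ 0} := by
    refine ⟨weightedTotalDegree w H, fun j hj => ?_⟩
    by_contra hcon
    rw [Set.mem_setOf_eq, vComponent_eq] at hj
    exact hj (weightedHomogeneousComponent_eq_zero (w := w) (n := j) (φ := H)
      (not_le.mp hcon))
  have hle_d₀ : ∀ e ∈ H.support, Finsupp.weight w e ≤ d₀ := by
    intro e he
    rw [hd₀]
    apply le_csSup hbdd
    rw [Set.mem_setOf_eq, vComponent_eq]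
    intro hzero
    have hc := coeff_weightedHomogeneousComponent (w := w) (n := Finsupp.weight w e) (φ := H) e
    rw [if_pos rfl, hzero, coeff_zero] at hc
    exact (mem_support_iff.mp he) hc.symm
  -- the key computation
  have hkey : ∀ k : Fin n, Bt (vHighest K n m H) (X k) = 0 := by
    intro k
    have hsmulB : ∀ (e : Fin n →₀ ℕ) (c : K),
        B (monomial e c) (X k) = c • B (monomial e 1) (X k) := by
      intro e c
      rw [show (monomial e c : MvPolynomial (Fin n) K) = c • monomial e 1 from
        by rw [smul_monomial, smul_eq_mul, mul_one], map_smul, LinearMap.smul_apply]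
    have hsmulBt : ∀ (e : Fin n →₀ ℕ) (c : K),
        Bt (monomial e c) (X k) = c • Bt (monomial e 1) (X k) := by
      intro e c
      rw [show (monomial e c : MvPolynomial (Fin n) K) = c • monomial e 1 from
        by rw [smul_monomial, smul_eq_mul, mul_one], map_smul, LinearMap.smul_apply]
    have hBH : B H (X k) = ∑ e ∈ H.support, H.coeff e • B (monomial e 1) (X k) := by
      conv_lhs => rw [← support_sum_monomial_coeff H]
      rw [map_sum, LinearMap.sum_apply]
      exact Finset.sum_congr rfl (fun e _ => hsmulB e (H.coeff e))
    have hzero : weightedHomogeneousComponent w (d₀ + w k) (B H (X k)) = 0 := by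
      rw [hcent (X k), map_zero]
    rw [hBH, map_sum] at hzero
    have hterm : ∀ e ∈ H.support,
        weightedHomogeneousComponent w (d₀ + w k) (H.coeff e • B (monomial e 1) (X k))
        = if Finsupp.weight w e = d₀ then H.coeff e • Bt (monomial e 1) (X k) else 0 := by
      intro e he
      rw [map_smul]
      by_cases h : Finsupp.weight w e = d₀
      · rw [if_pos h, ← h, (hP e k).2]
      · rw [if_neg h, (hP e k).1 (d₀ + w k)
          (by have := hle_d₀ e he; omega), smul_zero]
    rw [Finset.sum_congr rfl hterm, ← Finset.sum_filter] at hzero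
    have hfinal : Bt (vComponent K n m d₀ H) (X k) =
        ∑ e ∈ H.support.filter (fun e => Finsupp.weight w e = d₀),
          H.coeff e • Bt (monomial e 1) (X k) := by
      rw [vComponent, show H.support.filter (fun d => vWeight n m d = d₀)
          = H.support.filter (fun e => Finsupp.weight w e = d₀) from
        Finset.filter_congr (fun e _ => by rw [vWeight_eq_weight, ← hwdef]),
        map_sum, LinearMap.sum_apply]
      exact Finset.sum_congr rfl (fun e _ => hsmulBt e (H.coeff e))
    rw [hvhigh, hfinal]
    exact hzero
  -- conclude by the Leibniz rule
  intro a
  induction a using MvPolynomial.induction_on with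
  | C c => exact hBtC _ c
  | add p r hp hr => rw [map_add, hp, hr, add_zero]
  | mul_X p i hp => rw [hBtleib _ p (X i), hp, hkey, mul_zero, zero_mul, add_zero]
end

section
/- Let K be a field of characteristic zero and A a commutative integral domain containing K, equipped with a grading A = ⊕_{n∈ℕ} A_n by K-subspaces (A_m · A_n ⊆ A_{m+n}, K ⊆ A_0). For nonzero a ∈ A let a^• denote the homogeneous component of a of the highest degree occurring in a. Let H_1,…,H_ℓ ∈ A be nonzero elements whose highest components H_1^•,…,H_ℓ^• are algebraically independent over K. Then for every nonzero g in the K-subalgebra of A generated by H_1,…,H_ℓ, the highest component g^• lies in the K-subalgebra of A generated by H_1^•,…,H_ℓ^•. -/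
/-- The highest homogeneous component `a^•` of an element `a` of an ℕ-graded algebra:
the component of `a` in the largest degree in which `a` has a nonzero component. -/
noncomputable def highestComponent {K : Type} [Field K] {A : Type} [CommRing A] [Algebra K A]
    (𝒜 : ℕ → Submodule K A) [GradedAlgebra 𝒜] (a : A) : A :=
  GradedAlgebra.proj 𝒜 (sSup {n : ℕ | GradedAlgebra.proj 𝒜 n a ≠ 0}) a

section
variable {K : Type} [Field K] {A : Type} [CommRing A] [Algebra K A]
    (𝒜 : ℕ → Submodule K A) [GradedAlgebra 𝒜]

/-- `a` has all components above `N` zero and component `N` equal to `x`. -/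
def Tops (a : A) (N : ℕ) (x : A) : Prop :=
  GradedAlgebra.proj 𝒜 N a = x ∧ ∀ n, N < n → GradedAlgebra.proj 𝒜 n a = 0

theorem Tops_mul {a b x y : A} {Na Nb : ℕ} (ha : Tops 𝒜 a Na x) (hb : Tops 𝒜 b Nb y) :
    Tops 𝒜 (a * b) (Na + Nb) (x * y) := by
  classical
  have key : ∀ n, GradedAlgebra.proj 𝒜 n (a * b) =
      ∑ ij ∈ (((DirectSum.decompose 𝒜 a).support ×ˢ (DirectSum.decompose 𝒜 b).support).filter
        (fun ij : ℕ × ℕ => ij.1 + ij.2 = n)),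
        ((DirectSum.decompose 𝒜 a ij.1 : A) * (DirectSum.decompose 𝒜 b ij.2 : A)) := by
    intro n
    rw [GradedAlgebra.proj_apply, DirectSum.decompose_mul, DirectSum.coe_mul_apply]
  constructor
  · rw [key, ← ha.1, ← hb.1, GradedAlgebra.proj_apply, GradedAlgebra.proj_apply]
    apply Finset.sum_eq_single (Na, Nb)
    · rintro ⟨i, j⟩ hmem hne
      simp only [Finset.mem_filter, Finset.mem_product] at hmem
      have : Na < i ∨ Nb < j := by
        by_contra hc
        push_neg at hc
        have : i = Na ∧ j = Nb := by omega
        exact hne (by simp [this.1, this.2])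
      rcases this with h | h
      · have := ha.2 i h
        rw [GradedAlgebra.proj_apply] at this
        rw [this, zero_mul]
      · have := hb.2 j h
        rw [GradedAlgebra.proj_apply] at this
        rw [this, mul_zero]
    · intro hnm
      by_cases h1 : DirectSum.decompose 𝒜 a Na = 0
      · simp [h1]
      by_cases h2 : DirectSum.decompose 𝒜 b Nb = 0
      · simp [h2]
      refine absurd ?_ hnm
      exact Finset.mem_filter.2 ⟨Finset.mem_product.2
        ⟨DFinsupp.mem_support_iff.2 h1, DFinsupp.mem_support_iff.2 h2⟩, rfl⟩
  · intro n hn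
    rw [key]
    apply Finset.sum_eq_zero
    rintro ⟨i, j⟩ hmem
    simp only [Finset.mem_filter, Finset.mem_product, DFinsupp.mem_support_iff] at hmem
    have : Na < i ∨ Nb < j := by omega
    rcases this with h | h
    · have := ha.2 i h; rw [GradedAlgebra.proj_apply] at this; rw [this, zero_mul]
    · have := hb.2 j h; rw [GradedAlgebra.proj_apply] at this; rw [this, mul_zero]
end

section more
variable {K : Type} [Field K] {A : Type} [CommRing A] [Algebra K A]
    (𝒜 : ℕ → Submodule K A) [GradedAlgebra 𝒜]

theorem Tops_one : Tops 𝒜 (1 : A) 0 1 := by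
  constructor
  · rw [GradedAlgebra.proj_apply, DirectSum.decompose_one]
    simp [DirectSum.coe_of_apply, (DirectSum.one_def (A := fun n => 𝒜 n))]
  · intro n hn
    rw [GradedAlgebra.proj_apply, DirectSum.decompose_one,
      (DirectSum.one_def (A := fun n => 𝒜 n)), DirectSum.coe_of_apply,
      if_neg (by omega)]
    rfl

theorem Tops_pow {a x : A} {N : ℕ} (ha : Tops 𝒜 a N x) (k : ℕ) :
    Tops 𝒜 (a ^ k) (k * N) (x ^ k) := by
  induction k with
  | zero => simpa using Tops_one 𝒜
  | succ k ih =>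
    have := Tops_mul 𝒜 ih ha
    rw [← pow_succ, ← pow_succ] at this
    rw [show (k + 1) * N = k * N + N by ring]
    exact this

theorem Tops_smul {a x : A} {N : ℕ} (c : K) (ha : Tops 𝒜 a N x) :
    Tops 𝒜 (c • a) N (c • x) := by
  refine ⟨?_, fun n hn => ?_⟩
  · rw [map_smul, ha.1]
  · rw [map_smul, ha.2 n hn, smul_zero]

theorem Tops_algebraMap (c : K) : Tops 𝒜 (algebraMap K A c) 0 (algebraMap K A c) := by
  have := Tops_smul 𝒜 c (Tops_one 𝒜)
  simpa [Algebra.smul_def] using this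

theorem Tops_add {a b x y : A} {N : ℕ} (ha : Tops 𝒜 a N x) (hb : Tops 𝒜 b N y) :
    Tops 𝒜 (a + b) N (x + y) := by
  refine ⟨?_, fun n hn => ?_⟩
  · rw [map_add, ha.1, hb.1]
  · rw [map_add, ha.2 n hn, hb.2 n hn, add_zero]

theorem Tops_zero (N : ℕ) : Tops 𝒜 (0 : A) N 0 := by
  refine ⟨map_zero _, fun n hn => map_zero _⟩

theorem Tops_sum {ι : Type*} (s : Finset ι) (f x : ι → A) (N : ℕ)
    (h : ∀ i ∈ s, Tops 𝒜 (f i) N (x i)) :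
    Tops 𝒜 (∑ i ∈ s, f i) N (∑ i ∈ s, x i) := by
  classical
  induction s using Finset.induction with
  | empty => simpa using Tops_zero 𝒜 N
  | insert _ _ hni ih =>
    rw [Finset.sum_insert hni, Finset.sum_insert hni]
    exact Tops_add 𝒜 (h _ (Finset.mem_insert_self _ _))
      (ih fun i hi => h i (Finset.mem_insert_of_mem hi))

theorem Tops_mono {a x : A} {N M : ℕ} (ha : Tops 𝒜 a N x) (hNM : N ≤ M) :
    Tops 𝒜 a M (if N = M then x else 0) := by
  rcases eq_or_lt_of_le hNM with rfl | h
  · simpa using ha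
  · refine ⟨?_, fun n hn => ha.2 n (h.trans hn)⟩
    rw [if_neg h.ne, ha.2 M h]

theorem Tops_prod {ι : Type*} (s : Finset ι) (f x : ι → A) (N : ι → ℕ)
    (h : ∀ i ∈ s, Tops 𝒜 (f i) (N i) (x i)) :
    Tops 𝒜 (∏ i ∈ s, f i) (∑ i ∈ s, N i) (∏ i ∈ s, x i) := by
  classical
  induction s using Finset.induction with
  | empty => simpa using Tops_one 𝒜
  | insert _ _ hni ih =>
    rw [Finset.prod_insert hni, Finset.prod_insert hni, Finset.sum_insert hni]
    exact Tops_mul 𝒜 (h _ (Finset.mem_insert_self _ _))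
      (ih fun i hi => h i (Finset.mem_insert_of_mem hi))

/-- Characterization of the highest component via `Tops`. -/
theorem highestComponent_eq {a x : A} {N : ℕ} (ha : Tops 𝒜 a N x) (hx : x ≠ 0) :
    highestComponent 𝒜 a = x := by
  have hset : {n : ℕ | GradedAlgebra.proj 𝒜 n a ≠ 0} ⊆ Set.Iic N := by
    intro n hn
    by_contra hc
    exact hn (ha.2 n (by simpa using hc))
  have hNmem : N ∈ {n : ℕ | GradedAlgebra.proj 𝒜 n a ≠ 0} := by
    simp only [Set.mem_setOf_eq, ha.1]; exact hx
  have : sSup {n : ℕ | GradedAlgebra.proj 𝒜 n a ≠ 0} = N := by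
    apply le_antisymm
    · exact csSup_le ⟨N, hNmem⟩ fun n hn => hset hn
    · exact le_csSup ⟨N, fun n hn => hset hn⟩ hNmem
  rw [highestComponent, this, ha.1]
end more

section self
variable {K : Type} [Field K] {A : Type} [CommRing A] [Algebra K A]
    (𝒜 : ℕ → Submodule K A) [GradedAlgebra 𝒜]

theorem Tops_self {a : A} (ha : a ≠ 0) :
    Tops 𝒜 a (sSup {n : ℕ | GradedAlgebra.proj 𝒜 n a ≠ 0}) (highestComponent 𝒜 a) ∧
      highestComponent 𝒜 a ≠ 0 := by
  classical
  set S := {n : ℕ | GradedAlgebra.proj 𝒜 n a ≠ 0} with hS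
  have hfin : S.Finite := by
    apply Set.Finite.subset (Set.finite_coe_iff.1 ?_ : (↑(DirectSum.decompose 𝒜 a).support : Set ℕ).Finite)
    · intro n hn
      simp only [hS, Set.mem_setOf_eq, GradedAlgebra.proj_apply] at hn
      simp only [Finset.coe_sort_coe, Finset.mem_coe, DFinsupp.mem_support_iff]
      exact fun h => hn (by rw [h]; rfl)
    · infer_instance
  have hne : S.Nonempty := by
    by_contra hc
    rw [Set.not_nonempty_iff_eq_empty] at hc
    apply ha
    have : DirectSum.decompose 𝒜 a = 0 := by
      rw [← DFinsupp.support_eq_empty]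
      rw [Finset.eq_empty_iff_forall_notMem]
      intro n hn
      have hn' : n ∉ S := by rw [hc]; exact Set.notMem_empty n
      simp only [hS, Set.mem_setOf_eq, not_not, GradedAlgebra.proj_apply] at hn'
      exact DFinsupp.mem_support_iff.1 hn (Subtype.ext hn')
    have := congrArg (DirectSum.decompose 𝒜).symm this
    simpa using this
  have hmem : sSup S ∈ S := Set.Nonempty.csSup_mem hne hfin
  refine ⟨⟨rfl, fun n hn => ?_⟩, hmem⟩
  by_contra hc
  exact absurd (le_csSup hfin.bddAbove (hc : n ∈ S)) (by omega)
end self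


/-- Let `K` be a field of characteristic zero and `A` a commutative
integral domain containing `K`, with an ℕ-grading `A = ⊕ₙ Aₙ` by `K`-subspaces
(`Aₘ·Aₙ ⊆ A_{m+n}`, `K ⊆ A₀`).  Let `H_1, …, H_ℓ ∈ A` be nonzero elements whose highest
components `H_1^•, …, H_ℓ^•` are algebraically independent over `K`.  Then for every nonzero
`g` in the `K`-subalgebra generated by the `H_i`, the highest component `g^•` lies in the
`K`-subalgebra generated by the `H_i^•`. -/
theorem highest_components_generate
    (K : Type) [Field K] [CharZero K]
    (A : Type) [CommRing A] [IsDomain A] [Algebra K A]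
    (𝒜 : ℕ → Submodule K A) [GradedAlgebra 𝒜]
    (ℓ : ℕ) (H : Fin ℓ → A) (hH : ∀ i, H i ≠ 0)
    (hind : AlgebraicIndependent K fun i => highestComponent 𝒜 (H i)) :
    ∀ g ∈ Algebra.adjoin K (Set.range H), g ≠ 0 →
      highestComponent 𝒜 g ∈
        Algebra.adjoin K (Set.range fun i => highestComponent 𝒜 (H i)) := by
  classical
  intro g hg hg0
  set HC : Fin ℓ → A := fun i => highestComponent 𝒜 (H i) with hHC
  set d : Fin ℓ → ℕ := fun i => sSup {n : ℕ | GradedAlgebra.proj 𝒜 n (H i) ≠ 0} with hd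
  have hTopsH : ∀ i, Tops 𝒜 (H i) (d i) (HC i) := fun i => (Tops_self 𝒜 (hH i)).1
  -- get the polynomial
  rw [Algebra.adjoin_range_eq_range_aeval] at hg
  obtain ⟨P, hP''⟩ := hg
  have hP : MvPolynomial.aeval H P = g := hP''
  have hP0 : P ≠ 0 := by rintro rfl; exact hg0 (by simpa using hP.symm)
  -- weights
  set w : (Fin ℓ →₀ ℕ) → ℕ := fun m => ∑ i ∈ m.support, m i * d i with hw
  set D : ℕ := P.support.sup w with hD
  -- Tops for each monomial
  have hmono : ∀ m : Fin ℓ →₀ ℕ, Tops 𝒜 (MvPolynomial.aeval H (MvPolynomial.monomial m (MvPolynomial.coeff m P)))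
      (w m) (MvPolynomial.aeval HC (MvPolynomial.monomial m (MvPolynomial.coeff m P))) := by
    intro m
    rw [MvPolynomial.aeval_monomial, MvPolynomial.aeval_monomial]
    simp only [Finsupp.prod]
    have h1 := Tops_mul 𝒜 (Tops_algebraMap 𝒜 (MvPolynomial.coeff m P))
      (Tops_prod 𝒜 m.support (fun i => H i ^ m i) (fun i => HC i ^ m i) (fun i => m i * d i)
        (fun i _ => Tops_pow 𝒜 (hTopsH i) (m i)))
    rw [zero_add] at h1
    exact h1
  -- `g` as a sum of monomial evaluations
  have hgsum : g = ∑ m ∈ P.support,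
      MvPolynomial.aeval H (MvPolynomial.monomial m (MvPolynomial.coeff m P)) := by
    rw [← hP]
    conv_lhs => rw [MvPolynomial.as_sum P]
    rw [map_sum]
  -- the candidate top
  set Q : MvPolynomial (Fin ℓ) K :=
    ∑ m ∈ P.support.filter (fun m => w m = D), MvPolynomial.monomial m (MvPolynomial.coeff m P)
    with hQ
  have hTopsg : Tops 𝒜 g D (MvPolynomial.aeval HC Q) := by
    rw [hgsum, hQ, map_sum]
    rw [show (∑ m ∈ P.support.filter (fun m => w m = D),
        MvPolynomial.aeval HC (MvPolynomial.monomial m (MvPolynomial.coeff m P)))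
      = ∑ m ∈ P.support, if w m = D then
          MvPolynomial.aeval HC (MvPolynomial.monomial m (MvPolynomial.coeff m P)) else 0
      from (Finset.sum_filter _ _)]
    refine Tops_sum 𝒜 _ _ _ _ ?_
    intro m hm
    have := Tops_mono 𝒜 (hmono m) (Finset.le_sup hm)
    simpa using this
  -- Q is nonzero
  have hQ0 : Q ≠ 0 := by
    obtain ⟨m0, hm0, hm0w⟩ := Finset.exists_mem_eq_sup P.support
      (MvPolynomial.support_nonempty.2 hP0) w
    intro hc
    have : MvPolynomial.coeff m0 Q = MvPolynomial.coeff m0 P := by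
      rw [hQ, MvPolynomial.coeff_sum]
      simp_rw [MvPolynomial.coeff_monomial]
      rw [Finset.sum_ite_eq' (P.support.filter (fun m => w m = D)) m0
        (fun m => MvPolynomial.coeff m P)]
      rw [if_pos (Finset.mem_filter.2 ⟨hm0, hm0w.symm⟩)]
    rw [hc] at this
    exact (MvPolynomial.mem_support_iff.1 hm0) (by simpa using this.symm)
  have htopne : MvPolynomial.aeval HC Q ≠ 0 := fun hc =>
    hQ0 (hind (by simpa using hc))
  rw [highestComponent_eq 𝒜 hTopsg htopne]
  rw [Algebra.adjoin_range_eq_range_aeval]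
  exact ⟨Q, rfl⟩
end

section
/- Let q be a finite-dimensional Lie algebra over a field K of characteristic zero, V ⊆ q an abelian Lie ideal and f ⊆ q a Lie subalgebra with q = f ⊕ V as vector spaces. Let x = a + b ∈ q* with a(V) = 0 and b(f) = 0. Let q_x = {y ∈ q : x([y,z]) = 0 for all z ∈ q} be the coadjoint stabiliser of x (a Lie subalgebra of q), let f_b = {ξ ∈ f : b([ξ,v]) = 0 for all v ∈ V} (a Lie subalgebra of f), let (f_b)_ã = {ξ ∈ f_b : a([ξ,η]) = 0 for all η ∈ f_b} be the stabiliser in f_b of the restriction ã of a to f_b, and let 𝔞 = {v ∈ V : b([ξ,v]) = 0 for all ξ ∈ f} be the annihilator of f·b in V. Then 𝔞 ⊆ q_x, 𝔞 is a Lie ideal of q_x, and the quotient Lie algebra q_x/𝔞 is isomorphic to (f_b)_ã. -/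
/-- **Lemma on semi-direct products.** Let `q` be a finite-dimensional Lie
algebra over a field `K` of characteristic zero, `V ⊆ q` an abelian Lie ideal and
`f ⊆ q` a Lie subalgebra with `q = f ⊕ V` as vector spaces.  Let `x = a + b ∈ q*` with
`a(V) = 0` and `b(f) = 0`.  Let `q_x` be the coadjoint stabiliser of `x`, `f_b` the
stabiliser of `b` in `f`, `(f_b)_ã` the stabiliser in `f_b` of the restriction of `a`,
and `𝔞 = {v ∈ V : b(⁅f, v⁆) = 0}` the annihilator of `f·b` in `V`.  Then `𝔞 ⊆ q_x`,
`𝔞` is a Lie ideal of `q_x`, and `q_x/𝔞 ≅ (f_b)_ã` as Lie algebras. -/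
theorem stabiliser_of_semidirect_product
    (K : Type) [Field K] [CharZero K]
    (q : Type) [LieRing q] [LieAlgebra K q] [FiniteDimensional K q]
    (V : LieIdeal K q) (hVab : ∀ v ∈ V, ∀ w ∈ V, ⁅v, w⁆ = (0 : q))
    (f : LieSubalgebra K q)
    (hcompl : IsCompl f.toSubmodule V.toSubmodule)
    (a b : Module.Dual K q)
    (ha : ∀ v ∈ V, a v = 0) (hb : ∀ y ∈ f, b y = 0)
    (qx : LieSubalgebra K q)
    (hqx : ∀ y : q, y ∈ qx ↔ ∀ z : q, (a + b) ⁅y, z⁆ = 0)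
    (fb : LieSubalgebra K q)
    (hfb : ∀ y : q, y ∈ fb ↔ (y ∈ f ∧ ∀ v ∈ V, b ⁅y, v⁆ = 0))
    (fba : LieSubalgebra K q)
    (hfba : ∀ y : q, y ∈ fba ↔ (y ∈ fb ∧ ∀ z ∈ fb, a ⁅y, z⁆ = 0)) :
    ({v : q | v ∈ V ∧ ∀ ξ ∈ f, b ⁅ξ, v⁆ = 0} ⊆ (qx : Set q)) ∧
    ∃ I : LieIdeal K qx,
      (∀ y : qx, y ∈ I ↔ ((y : q) ∈ V ∧ ∀ ξ ∈ f, b ⁅ξ, (y : q)⁆ = 0)) ∧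
      Nonempty ((qx ⧸ I) ≃ₗ⁅K⁆ fba) := by
  classical
  -- brackets with an element of V lie in V
  have hVl : ∀ {z y : q}, y ∈ V → ⁅z, y⁆ ∈ V := fun {z y} h => V.lie_mem h
  have hVr : ∀ {z y : q}, y ∈ V → ⁅y, z⁆ ∈ V := by
    intro z y h
    rw [← lie_skew]
    exact neg_mem (V.lie_mem h)
  -- decomposition of elements of q
  have hsplit : ∀ z : q, ∃ η ∈ f, ∃ w ∈ V, z = η + w := by
    intro z
    have htop : z ∈ f.toSubmodule ⊔ V.toSubmodule := by
      rw [codisjoint_iff.mp hcompl.codisjoint]; trivial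
    obtain ⟨η, hη, w, hw, h⟩ := Submodule.mem_sup.mp htop
    exact ⟨η, hη, w, hw, h.symm⟩
  -- key membership characterisation
  have hkey : ∀ ξ v : q, ξ ∈ f → v ∈ V →
      (ξ + v ∈ qx ↔ ((∀ w ∈ V, b ⁅ξ, w⁆ = 0) ∧ ∀ η ∈ f, a ⁅ξ, η⁆ + b ⁅v, η⁆ = 0)) := by
    intro ξ v hξ hv
    rw [hqx]
    constructor
    · intro h
      constructor
      · intro w hw
        have h0 := h w
        have e1 : a ⁅ξ, w⁆ = 0 := ha _ (hVl hw)
        have e3 : ⁅v, w⁆ = 0 := hVab v hv w hw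
        simp only [add_lie, LinearMap.add_apply, map_add, e3, map_zero, add_zero] at h0
        linear_combination h0 - e1
      · intro η hη
        have h0 := h η
        have e2 : a ⁅v, η⁆ = 0 := ha _ (hVr hv)
        have e4 : b ⁅ξ, η⁆ = 0 := hb _ (f.lie_mem hξ hη)
        simp only [add_lie, LinearMap.add_apply, map_add] at h0
        linear_combination h0 - e2 - e4
    · rintro ⟨h1, h2⟩ z
      obtain ⟨η, hη, w, hw, rfl⟩ := hsplit z
      have e1 : a ⁅ξ, w⁆ = 0 := ha _ (hVl hw)
      have e2 : a ⁅v, η⁆ = 0 := ha _ (hVr hv)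
      have e3 : ⁅v, w⁆ = (0 : q) := hVab v hv w hw
      have e4 : b ⁅ξ, η⁆ = 0 := hb _ (f.lie_mem hξ hη)
      have e5 : b ⁅ξ, w⁆ = 0 := h1 w hw
      have e7 := h2 η hη
      simp only [add_lie, lie_add, LinearMap.add_apply, map_add, e3, map_zero, add_zero]
      linear_combination e1 + e2 + e4 + e5 + e7
  -- part 1 : 𝔞 ⊆ qx
  have part1 : {v : q | v ∈ V ∧ ∀ ξ ∈ f, b ⁅ξ, v⁆ = 0} ⊆ (qx : Set q) := by
    rintro v ⟨hvV, hvb⟩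
    have h := (hkey 0 v f.zero_mem hvV).mpr ?_
    · simpa using h
    constructor
    · intro w _; simp
    · intro η hη
      have : b ⁅v, η⁆ = 0 := by
        rw [← lie_skew, map_neg, hvb η hη, neg_zero]
      simp [this]
  refine ⟨part1, ?_⟩
  -- the projection onto f along V
  set π := f.toSubmodule.linearProjOfIsCompl V.toSubmodule hcompl with hπ
  have hπ_left : ∀ w : q, w ∈ f → (π w : q) = w := by
    intro w hw
    exact congrArg Subtype.val (Submodule.linearProjOfIsCompl_apply_left hcompl ⟨w, hw⟩)
  have hπ_right : ∀ w : q, w ∈ V → (π w : q) = 0 := by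
    intro w hw
    exact congrArg Subtype.val (Submodule.projectionOnto_apply_of_mem_right hcompl hw)
  have hπ_eq : ∀ w u : q, u ∈ f → w - u ∈ V → (π w : q) = u := by
    intro w u hu hwu
    have h1 : π w = π u + π (w - u) := by rw [← map_add]; congr 1; abel
    have h2 : ((π u + π (w - u) : f.toSubmodule) : q) = (π u : q) + (π (w - u) : q) := rfl
    rw [h1, h2, hπ_left u hu, hπ_right _ hwu, add_zero]
  have hsub : ∀ y : q, y - (π y : q) ∈ V := by
    intro y
    have h := Submodule.projection_add_projection_eq_self hcompl y
    have h2 : y - (π y : q) =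
        ((V.toSubmodule.linearProjOfIsCompl f.toSubmodule hcompl.symm y : q)) :=
      sub_eq_of_eq_add' h.symm
    rw [h2]
    exact (V.toSubmodule.linearProjOfIsCompl f.toSubmodule hcompl.symm y).2
  -- the projection of an element of qx lies in fba
  have hmemfba : ∀ y : q, y ∈ qx → (π y : q) ∈ fba := by
    intro y hy
    set ξ : q := (π y : q) with hξdef
    have hξf : ξ ∈ f := (π y).2
    set v : q := y - ξ with hvdef
    have hvV : v ∈ V := hsub y
    have hyk : ξ + v ∈ qx := by rw [hvdef]; simpa using hy
    obtain ⟨h1, h2⟩ := (hkey ξ v hξf hvV).mp hyk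
    have hξfb : ξ ∈ fb := (hfb ξ).mpr ⟨hξf, h1⟩
    refine (hfba ξ).mpr ⟨hξfb, ?_⟩
    intro z hz
    have hzf : z ∈ f := ((hfb z).mp hz).1
    have hzv : b ⁅z, v⁆ = 0 := ((hfb z).mp hz).2 v hvV
    have hvz : b ⁅v, z⁆ = 0 := by rw [← lie_skew, map_neg, hzv, neg_zero]
    have h3 := h2 z hzf
    linear_combination h3 - hvz
  -- the Lie algebra morphism qx → fba
  let φ : qx →ₗ⁅K⁆ fba :=
    { toFun := fun y => ⟨(π (y : q) : q), hmemfba (y : q) y.2⟩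
      map_add' := fun y z => by
        ext
        show (π (((y : q) + (z : q))) : q) = _
        rw [map_add]
        rfl
      map_smul' := fun c y => by
        ext
        show (π ((c • (y : q))) : q) = _
        rw [map_smul]
        rfl
      map_lie' := by
        intro y z
        ext
        show (π ⁅(y : q), (z : q)⁆ : q) = ⁅(π (y : q) : q), (π (z : q) : q)⁆
        set ξ₁ : q := (π (y : q) : q)
        set ξ₂ : q := (π (z : q) : q)
        have h₁ : (y : q) - ξ₁ ∈ V := hsub y
        have h₂ : (z : q) - ξ₂ ∈ V := hsub z
        apply hπ_eq
        · exact f.lie_mem (π (y : q)).2 (π (z : q)).2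
        · have hrw : ⁅(y : q), (z : q)⁆ - ⁅ξ₁, ξ₂⁆ =
              ⁅ξ₁, (z : q) - ξ₂⁆ + ⁅(y : q) - ξ₁, ξ₂⁆ + ⁅(y : q) - ξ₁, (z : q) - ξ₂⁆ := by
            simp only [lie_sub, sub_lie]
            abel
          rw [hrw]
          exact add_mem (add_mem (hVl h₂) (hVr h₁)) (hVl h₂) }
  -- surjectivity of φ , via duality
  have hsurj : Function.Surjective φ := by
    rintro ⟨ξ, hξ⟩
    obtain ⟨hξfb, hξa⟩ := (hfba ξ).mp hξ
    obtain ⟨hξf, hξb⟩ := (hfb ξ).mp hξfb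
    -- the pairing V → (f)*
    let Φ : V.toSubmodule →ₗ[K] Module.Dual K f.toSubmodule :=
      { toFun := fun v =>
          { toFun := fun η => b ⁅(η : q), (v : q)⁆
            map_add' := fun η₁ η₂ => by simp [add_lie]
            map_smul' := fun c η => by simp [smul_lie] }
        map_add' := fun v₁ v₂ => LinearMap.ext fun η => by simp [lie_add]
        map_smul' := fun c v => LinearMap.ext fun η => by simp [lie_smul] }
    let c : Module.Dual K f.toSubmodule :=
      { toFun := fun η => a ⁅ξ, (η : q)⁆
        map_add' := fun η₁ η₂ => by simp [lie_add]
        map_smul' := fun cc η => by simp [lie_smul] }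
    have hc : c ∈ (LinearMap.range Φ).dualCoannihilator.dualAnnihilator := by
      rw [Submodule.mem_dualAnnihilator]
      intro η hη
      rw [Submodule.mem_dualCoannihilator] at hη
      have hηfb : (η : q) ∈ fb := by
        refine (hfb (η : q)).mpr ⟨η.2, ?_⟩
        intro v hv
        exact hη (Φ ⟨v, hv⟩) (LinearMap.mem_range_self Φ _)
      exact hξa (η : q) hηfb
    rw [Subspace.dualCoannihilator_dualAnnihilator_eq] at hc
    obtain ⟨v, hv⟩ := hc
    have hvprop : ∀ η ∈ f, b ⁅η, (v : q)⁆ = a ⁅ξ, η⁆ := by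
      intro η hη
      have := congrFun (congrArg DFunLike.coe hv) ⟨η, hη⟩
      exact this
    have hyqx : ξ + (v : q) ∈ qx := by
      refine (hkey ξ (v : q) hξf v.2).mpr ⟨hξb, ?_⟩
      intro η hη
      have h1 : b ⁅(v : q), η⁆ = -a ⁅ξ, η⁆ := by
        rw [← lie_skew, map_neg, hvprop η hη]
      rw [h1]; ring
    refine ⟨⟨ξ + (v : q), hyqx⟩, ?_⟩
    ext
    show (π (ξ + (v : q)) : q) = ξ
    apply hπ_eq _ _ hξf
    simp
  -- the kernel of φ is the required ideal
  refine ⟨φ.ker, ?_, ?_⟩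
  · intro y
    rw [LieHom.mem_ker]
    constructor
    · intro h
      have hπ0 : (π (y : q) : q) = 0 := congrArg Subtype.val h
      have hyV : (y : q) ∈ V := by
        have := hsub (y : q)
        rwa [hπ0, sub_zero] at this
      refine ⟨hyV, ?_⟩
      intro ζ hζ
      have h0 := (hqx (y : q)).mp y.2 ζ
      simp only [LinearMap.add_apply] at h0
      have e1 : a ⁅(y : q), ζ⁆ = 0 := ha _ (hVr hyV)
      have hbz : b ⁅(y : q), ζ⁆ = 0 := by linear_combination h0 - e1
      rw [← lie_skew, map_neg, hbz, neg_zero]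
    · rintro ⟨hyV, -⟩
      ext
      show (π (y : q) : q) = 0
      exact hπ_right _ hyV
  · have hrange : φ.range = ⊤ := (LieHom.range_eq_top φ).mpr hsurj
    exact ⟨φ.quotKerEquivRange.trans
      ((LieEquiv.ofEq _ _ (by rw [hrange])).trans LieSubalgebra.topEquiv)⟩
end

section
/- Let q be a finite-dimensional Lie algebra over a field K of characteristic zero, V ⊆ q an abelian Lie ideal and f ⊆ q a Lie subalgebra with q = f ⊕ V as vector spaces. Let x = a + b ∈ q* with a(V) = 0 and b(f) = 0, and keep the notation q_x, f_b, (f_b)_ã, 𝔞. Then: (1) q_x ∩ V = 𝔞; (2) q_x ⊆ (f_b)_ã ⊕ V, i.e., the projection pr_f along V maps q_x into (f_b)_ã; (3) this projection is onto: for every ξ ∈ (f_b)_ã there exists η ∈ V with ξ + η ∈ q_x, equivalently with a([ξ,ζ]) + b([η,ζ]) = 0 for all ζ ∈ f. Consequently pr_f restricts to a surjective Lie algebra homomorphism q_x → (f_b)_ã with kernel 𝔞. -/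
lemma exists_dual_preimage {K F W : Type} [Field K]
    [AddCommGroup F] [Module K F] [FiniteDimensional K F]
    [AddCommGroup W] [Module K W]
    (B : F →ₗ[K] W →ₗ[K] K) (lam : Module.Dual K F)
    (hlam : ∀ ζ : F, (∀ w : W, B ζ w = 0) → lam ζ = 0) :
    ∃ w : W, ∀ ζ : F, B ζ w = lam ζ := by
  set Φ : Submodule K (Module.Dual K F) := LinearMap.range B.flip with hΦ
  have key : Φ.dualCoannihilator.dualAnnihilator = Φ :=
    Subspace.dualCoannihilator_dualAnnihilator_eq
  have hmem : lam ∈ Φ.dualCoannihilator.dualAnnihilator := by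
    rw [Submodule.mem_dualAnnihilator]
    intro ζ hζ
    rw [Submodule.mem_dualCoannihilator] at hζ
    exact hlam ζ (fun w => hζ (B.flip w) ⟨w, rfl⟩)
  rw [key] at hmem
  obtain ⟨w, hw⟩ := hmem
  exact ⟨w, fun ζ => by rw [← hw]; rfl⟩

/-- Let `q` be a finite-dimensional Lie algebra over a field `K` of
characteristic zero, `V ⊆ q` an abelian Lie ideal and `f ⊆ q` a Lie subalgebra with
`q = f ⊕ V` as vector spaces, with projection `prf` onto `f` along `V`.  Let `x = a + b ∈ q*`
with `a(V) = 0`, `b(f) = 0`, and keep the notation `q_x`, `f_b`, `(f_b)_ã`,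
`𝔞 = {v ∈ V : b(⁅f, v⁆) = 0}`.  Then (1) `q_x ∩ V = 𝔞`; (2) `prf` maps `q_x` into `(f_b)_ã`;
(3) every `ξ ∈ (f_b)_ã` can be corrected by some `η ∈ V` so that `ξ + η ∈ q_x`.
Consequently `prf` restricts to a surjective Lie algebra homomorphism `q_x → (f_b)_ã`
with kernel `𝔞`. -/
theorem stabiliser_projection_surjective
    (K : Type) [Field K] [CharZero K]
    (q : Type) [LieRing q] [LieAlgebra K q] [FiniteDimensional K q]
    (V : LieIdeal K q) (hVab : ∀ v ∈ V, ∀ w ∈ V, ⁅v, w⁆ = (0 : q))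
    (f : LieSubalgebra K q)
    (hcompl : IsCompl f.toSubmodule V.toSubmodule)
    (prf : q →ₗ[K] q)
    (hprf_f : ∀ y ∈ f, prf y = y)
    (hprf_V : ∀ v ∈ V, prf v = 0)
    (a b : Module.Dual K q)
    (ha : ∀ v ∈ V, a v = 0) (hb : ∀ y ∈ f, b y = 0)
    (qx : LieSubalgebra K q)
    (hqx : ∀ y : q, y ∈ qx ↔ ∀ z : q, (a + b) ⁅y, z⁆ = 0)
    (fb : LieSubalgebra K q)
    (hfb : ∀ y : q, y ∈ fb ↔ (y ∈ f ∧ ∀ v ∈ V, b ⁅y, v⁆ = 0))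
    (fba : LieSubalgebra K q)
    (hfba : ∀ y : q, y ∈ fba ↔ (y ∈ fb ∧ ∀ z ∈ fb, a ⁅y, z⁆ = 0)) :
    (∀ y : q, (y ∈ qx ∧ y ∈ V) ↔ (y ∈ V ∧ ∀ ξ ∈ f, b ⁅ξ, y⁆ = 0)) ∧
    (∀ y ∈ qx, prf y ∈ fba) ∧
    (∀ ξ ∈ fba, ∃ η ∈ V, ξ + η ∈ qx) ∧
    ∃ φ : qx →ₗ⁅K⁆ fba,
      (∀ y : qx, (φ y : q) = prf (y : q)) ∧
      Function.Surjective φ ∧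
      (∀ y : qx, φ y = 0 ↔ ((y : q) ∈ V ∧ ∀ ξ ∈ f, b ⁅ξ, (y : q)⁆ = 0)) := by
  -- lie of a V-element with anything is in V
  have hVlie : ∀ (w : q) {v : q}, v ∈ V → ⁅v, w⁆ ∈ V := by
    intro w v hv
    rw [← lie_skew]
    exact neg_mem (V.lie_mem hv)
  -- decomposition facts
  have hfV : ∀ y : q, prf y ∈ f ∧ y - prf y ∈ V := by
    intro y
    have hy : y ∈ f.toSubmodule ⊔ V.toSubmodule := by
      rw [hcompl.sup_eq_top]; trivial
    obtain ⟨u, hu, v, hv, huv⟩ := Submodule.mem_sup.mp hy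
    have hpy : prf y = u := by
      rw [← huv, map_add, hprf_f u hu, hprf_V v hv, add_zero]
    constructor
    · rw [hpy]; exact hu
    · rw [hpy, ← huv]
      have : u + v - u = v := by abel
      rw [this]; exact hv
  -- Part (1)
  have part1 : ∀ y : q, (y ∈ qx ∧ y ∈ V) ↔ (y ∈ V ∧ ∀ ξ ∈ f, b ⁅ξ, y⁆ = 0) := by
    intro y
    constructor
    · rintro ⟨hyq, hyV⟩
      refine ⟨hyV, fun ξ hξ => ?_⟩
      have h := (hqx y).mp hyq ξ
      rw [LinearMap.add_apply, ha _ (hVlie ξ hyV), zero_add] at h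
      rw [← lie_skew, map_neg, h, neg_zero]
    · rintro ⟨hyV, hby⟩
      refine ⟨(hqx y).mpr fun z => ?_, hyV⟩
      have hz := hfV z
      have hdec : ⁅y, z⁆ = ⁅y, prf z⁆ + ⁅y, z - prf z⁆ := by
        rw [← lie_add]; congr 1; abel
      rw [hdec, hVab y hyV _ hz.2, add_zero, LinearMap.add_apply,
        ha _ (hVlie (prf z) hyV)]
      have : b ⁅y, prf z⁆ = 0 := by
        rw [← lie_skew, map_neg, hby _ hz.1, neg_zero]
      rw [this, add_zero]
  -- Part (2)
  have part2 : ∀ y ∈ qx, prf y ∈ fba := by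
    intro y hy
    have h1 := hfV y
    have hdecl : ∀ z : q, ⁅y, z⁆ = ⁅prf y, z⁆ + ⁅y - prf y, z⁆ := by
      intro z; rw [← add_lie]; congr 1; abel
    have hmemfb : prf y ∈ fb := by
      rw [hfb]
      refine ⟨h1.1, fun v hv => ?_⟩
      have h := (hqx y).mp hy v
      rw [LinearMap.add_apply, ha _ (V.lie_mem hv), zero_add, hdecl v,
        hVab _ h1.2 v hv, add_zero] at h
      exact h
    rw [hfba]
    refine ⟨hmemfb, fun z hz => ?_⟩
    obtain ⟨hzf, hzb⟩ := (hfb z).mp hz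
    have h := (hqx y).mp hy z
    rw [LinearMap.add_apply, hdecl z, map_add, map_add,
      ha _ (hVlie z h1.2), add_zero, hb _ (f.lie_mem h1.1 hzf), zero_add] at h
    have : b ⁅y - prf y, z⁆ = 0 := by
      rw [← lie_skew, map_neg, hzb _ h1.2, neg_zero]
    rw [this, add_zero] at h
    exact h
  -- Part (3)
  have part3 : ∀ ξ ∈ fba, ∃ η ∈ V, ξ + η ∈ qx := by
    intro ξ hξ
    obtain ⟨hξfb, hξa⟩ := (hfba ξ).mp hξ
    obtain ⟨hξf, hξb⟩ := (hfb ξ).mp hξfb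
    -- bilinear form B(ζ, v) = b ⁅ζ, v⁆ on f × V
    let B : f.toSubmodule →ₗ[K] V.toSubmodule →ₗ[K] K :=
      LinearMap.mk₂ K (fun ζ v => b ⁅(ζ : q), (v : q)⁆)
        (fun ζ ζ' v => by simp [add_lie])
        (fun c ζ v => by simp [smul_lie])
        (fun ζ v v' => by simp [lie_add])
        (fun c ζ v => by simp [lie_smul])
    let lam : Module.Dual K f.toSubmodule :=
      { toFun := fun ζ => a ⁅ξ, (ζ : q)⁆
        map_add' := fun ζ ζ' => by simp [lie_add]
        map_smul' := fun c ζ => by simp [lie_smul] }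
    have hlam : ∀ ζ : f.toSubmodule, (∀ v : V.toSubmodule, B ζ v = 0) → lam ζ = 0 := by
      intro ζ hζ
      have hζfb : (ζ : q) ∈ fb := by
        rw [hfb]
        exact ⟨ζ.2, fun v hv => hζ ⟨v, hv⟩⟩
      exact hξa _ hζfb
    obtain ⟨η, hη⟩ := exists_dual_preimage B lam hlam
    refine ⟨η, η.2, (hqx _).mpr fun z => ?_⟩
    have hz := hfV z
    set u : q := prf z with hu
    have hdec : ⁅ξ + (η : q), z⁆ =
        ⁅ξ, u⁆ + ⁅ξ, z - u⁆ + ⁅(η : q), u⁆ + ⁅(η : q), z - u⁆ := by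
      simp only [lie_sub, add_lie]
      abel
    rw [LinearMap.add_apply, hdec]
    have e1 : b ⁅ξ, u⁆ = 0 := hb _ (f.lie_mem hξf hz.1)
    have e2 : a ⁅ξ, z - u⁆ = 0 := ha _ (V.lie_mem hz.2)
    have e3 : b ⁅ξ, z - u⁆ = 0 := hξb _ hz.2
    have e4 : a ⁅(η : q), u⁆ = 0 := ha _ (hVlie u η.2)
    have e5 : b ⁅(η : q), u⁆ = - a ⁅ξ, u⁆ := by
      rw [← lie_skew, map_neg]
      have := hη ⟨u, hz.1⟩
      simp only [B, lam, LinearMap.mk₂_apply, LinearMap.coe_mk, AddHom.coe_mk] at this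
      rw [this]
    have e6 : ⁅(η : q), z - u⁆ = 0 := hVab _ η.2 _ hz.2
    rw [e6]
    simp only [map_add, map_zero, add_zero]
    rw [e1, e2, e3, e4, e5]
    ring
  -- bracket commutes with prf
  have hbr : ∀ y z : q, prf ⁅y, z⁆ = ⁅prf y, prf z⁆ := by
    intro y z
    have h1 := hfV y
    have h2 := hfV z
    have e : ⁅y, z⁆ = ⁅prf y, prf z⁆ + (⁅prf y, z - prf z⁆ + ⁅y - prf y, z⁆) := by
      simp only [lie_sub, sub_lie]
      abel
    rw [e, map_add, map_add, hprf_V _ (V.lie_mem h2.2),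
      hprf_f _ (f.lie_mem h1.1 h2.1)]
    have : prf ⁅y - prf y, z⁆ = 0 := hprf_V _ (hVlie z h1.2)
    rw [this, add_zero, add_zero]
  -- prf y = 0 ↔ y ∈ V
  have hker : ∀ y : q, prf y = 0 ↔ y ∈ V := by
    intro y
    constructor
    · intro h
      have := (hfV y).2
      rwa [h, sub_zero] at this
    · exact hprf_V y
  refine ⟨part1, part2, part3, ?_⟩
  refine ⟨{ toFun := fun y => ⟨prf y.1, part2 y.1 y.2⟩
            map_add' := fun y z => by ext; simp
            map_smul' := fun c y => by
              ext
              change prf (c • (y : q)) = c • prf (y : q)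
              rw [map_smul]
            map_lie' := fun {y z} => by
              ext
              exact hbr y.1 z.1 }, fun y => rfl, ?_, ?_⟩
  · rintro ⟨ξ, hξ⟩
    obtain ⟨η, hηV, hmem⟩ := part3 ξ hξ
    refine ⟨⟨ξ + η, hmem⟩, ?_⟩
    apply Subtype.ext
    show prf (ξ + η) = ξ
    have hξf : ξ ∈ f := ((hfb ξ).mp ((hfba ξ).mp hξ).1).1
    rw [map_add, hprf_f ξ hξf, hprf_V η hηV, add_zero]
  · intro y
    have h0 : (⟨prf y.1, part2 y.1 y.2⟩ : fba) = 0 ↔ prf y.1 = 0 := by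
      constructor
      · intro h; exact congrArg Subtype.val h
      · intro h; exact Subtype.ext h
    show (⟨prf y.1, part2 y.1 y.2⟩ : fba) = 0 ↔ ((y : q) ∈ V ∧ ∀ ξ ∈ f, b ⁅ξ, (y : q)⁆ = 0)
    rw [h0, hker]
    constructor
    · intro h; exact (part1 y.1).mp ⟨y.2, h⟩
    · intro h; exact ((part1 y.1).mpr h).2
end
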